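/- Let J = J₀ + D on ℓ²(ℤ^ν) with bounded potential d. If Im(d(k)) → 0 as ‖k‖₁ → ∞, then every eigenvalue of J lying on the boundary of the numerical range of J is real. -/

import Mathlib

/-!
Let `u` be a unit eigenvector of `J` for an eigenvalue `λ` on the boundary of the numerical range.
Then `u` is also an eigenvector of the adjoint, for `conj λ`: otherwise some `w ⊥ u` has
`⟪u, J w⟫ ≠ 0`, and the Rayleigh quotients of `u + t w`, which are
`λ + t ⟪u, J w⟫ + O(|t|²)`, cover a neighbourhood of `λ`. Comparing `J u = λ u` with
`J* u = conj λ u` at a site `k` gives `Im d(k) = Im λ` wherever `u(k) ≠ 0`. So if `Im λ ≠ 0`, the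
decay of `Im d` confines `u` to a bounded set; but an eigenfunction of `J` vanishing on a half-space
`{k | k_j > M}` vanishes identically, since the eigenvalue equation can be solved for `u(k - e_j)`.
-/

open scoped InnerProductSpace

/-- The action of `J = J₀ + D` at `k ∈ ℤ^ν`. -/
noncomputable def Jact {ν : ℕ} (d : (Fin ν → ℤ) → ℂ) (u : (Fin ν → ℤ) → ℂ)
    (k : Fin ν → ℤ) : ℂ :=
  (∑ j : Fin ν, (u (k + Pi.single j 1) + u (k - Pi.single j 1))) + d k * u k

/-- The numerical range of `J`. -/
noncomputable def numRangeJ {ν : ℕ} (d : (Fin ν → ℤ) → ℂ) : Set ℂ :=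
  {z | ∃ u v : lp (fun _ : (Fin ν → ℤ) => ℂ) 2, ‖u‖ = 1 ∧
    (∀ k, v k = Jact d (fun m => u m) k) ∧ ⟪u, v⟫_ℂ = z}

open scoped ComplexConjugate
open Filter Topology

lemma exists_norm_eq_mul_of_norm_le (a c z : ℂ) (s : ℝ) {r : ℝ} (hr : 0 ≤ r)
    (hle : ‖((1 + r ^ 2 * s : ℝ) : ℂ) * z - ((r ^ 2 : ℝ) : ℂ) * c‖ ≤ r * ‖a‖) :
    ∃ ρ : ℝ, ‖((1 + ρ ^ 2 * s : ℝ) : ℂ) * z - ((ρ ^ 2 : ℝ) : ℂ) * c‖ = ρ * ‖a‖ := by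
  have hcont : ContinuousOn
      (fun ρ : ℝ => ‖((1 + ρ ^ 2 * s : ℝ) : ℂ) * z - ((ρ ^ 2 : ℝ) : ℂ) * c‖ - ρ * ‖a‖)
      (Set.Icc 0 r) := by fun_prop
  obtain ⟨ρ, -, hroot⟩ := intermediate_value_Icc' hr hcont
    (Set.mem_Icc.2 ⟨sub_nonpos.2 hle, by simp⟩)
  exact ⟨ρ, sub_eq_zero.1 hroot⟩

lemma eventually_exists_mul_add_norm_sq_mul_eq {a : ℂ} (ha : a ≠ 0) (c : ℂ) {s : ℝ}
    (hs : 0 ≤ s) :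
    ∀ᶠ z in 𝓝 (0 : ℂ), ∃ t : ℂ,
      t * a + (‖t‖ : ℂ) ^ 2 * c = (1 + (‖t‖ : ℂ) ^ 2 * s) * z := by
  have ha' : 0 < ‖a‖ := norm_pos_iff.2 ha
  set r := ‖a‖ / (2 * (‖c‖ + 1)) with hr
  have hr0 : 0 < r := by positivity
  have hrc : r * ‖c‖ ≤ ‖a‖ / 2 := by
    rw [hr, div_mul_eq_mul_div, div_le_div_iff₀ (by positivity) two_pos]
    nlinarith [norm_nonneg c]
  filter_upwards [Metric.ball_mem_nhds 0 (by positivity : 0 < r * ‖a‖ / (2 * (1 + r ^ 2 * s)))]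
    with z hz
  rw [mem_ball_zero_iff, lt_div_iff₀ (by positivity)] at hz
  have hle : ‖((1 + r ^ 2 * s : ℝ) : ℂ) * z - ((r ^ 2 : ℝ) : ℂ) * c‖ ≤ r * ‖a‖ :=
    calc _ ≤ (1 + r ^ 2 * s) * ‖z‖ + r ^ 2 * ‖c‖ := by
          refine (norm_sub_le _ _).trans_eq ?_
          rw [norm_mul, norm_mul, Complex.norm_real, Complex.norm_real, Real.norm_of_nonneg,
            Real.norm_of_nonneg] <;> positivity
      _ ≤ r * ‖a‖ := by nlinarith
  obtain ⟨ρ, hρ⟩ := exists_norm_eq_mul_of_norm_le a c z s hr0.le hle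
  -- once `‖t‖ = ρ` is known, the equation is linear in `t`
  set t := (((1 + ρ ^ 2 * s : ℝ) : ℂ) * z - ((ρ ^ 2 : ℝ) : ℂ) * c) / a
  have hta : t * a = ((1 + ρ ^ 2 * s : ℝ) : ℂ) * z - ((ρ ^ 2 : ℝ) : ℂ) * c :=
    div_mul_cancel₀ _ ha
  have ht : ‖t‖ = ρ := by
    rw [norm_div, hρ, mul_div_cancel_right₀ _ ha'.ne']
  refine ⟨t, ?_⟩
  rw [hta, ht]
  push_cast
  ring

section NumericalRange

variable {E : Type*} [NormedAddCommGroup E] [InnerProductSpace ℂ E]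

/-- The numerical range of a linear relation `G ⊆ E × E`, such as the graph of an unbounded
operator. -/
def numericalRange (G : Submodule ℂ (E × E)) : Set ℂ :=
  {z | ∃ p ∈ G, ‖p.1‖ = 1 ∧ ⟪p.1, p.2⟫_ℂ = z}

variable {G : Submodule ℂ (E × E)}

lemma inner_div_norm_sq_mem_numericalRange {x y : E} (h : (x, y) ∈ G) (hx : x ≠ 0) :
    ⟪x, y⟫_ℂ / (‖x‖ : ℂ) ^ 2 ∈ numericalRange G := by
  refine ⟨(‖x‖⁻¹ : ℂ) • (x, y), G.smul_mem _ h, norm_smul_inv_norm hx, ?_⟩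
  have : (‖x‖ : ℂ) ≠ 0 := by simpa using hx
  simp only [Prod.smul_fst, Prod.smul_snd, inner_smul_left, inner_smul_right, map_inv₀,
    Complex.conj_ofReal]
  field_simp

variable {u w W : E} {lam : ℂ}

lemma add_smul_mem_numericalRange (hu : ‖u‖ = 1) (heig : (u, lam • u) ∈ G) (hw : (w, W) ∈ G)
    (horth : ⟪u, w⟫_ℂ = 0) (t : ℂ) :
    (lam + t * ⟪u, W⟫_ℂ + (‖t‖ : ℂ) ^ 2 * ⟪w, W⟫_ℂ) / (1 + (‖t‖ : ℂ) ^ 2 * (‖w‖ : ℂ) ^ 2)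
      ∈ numericalRange G := by
  have hmem : (u + t • w, lam • u + t • W) ∈ G := G.add_mem heig (G.smul_mem t hw)
  have hne : u + t • w ≠ 0 := by
    have : ⟪u, u + t • w⟫_ℂ = 1 := by
      rw [inner_add_right, inner_smul_right, horth, inner_self_eq_norm_sq_to_K, hu]
      simp
    rintro h
    simp [h] at this
  have horth' : ⟪w, u⟫_ℂ = 0 := by rw [← inner_conj_symm, horth, map_zero]
  have hnorm : (‖u + t • w‖ : ℂ) ^ 2 = 1 + (‖t‖ : ℂ) ^ 2 * (‖w‖ : ℂ) ^ 2 := by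
    have := norm_add_sq_eq_norm_sq_add_norm_sq_of_inner_eq_zero (𝕜 := ℂ) u (t • w)
      (by rw [inner_smul_right, horth, mul_zero])
    rw [norm_smul, hu] at this
    exact_mod_cast (by linear_combination this : ‖u + t • w‖ ^ 2 = 1 + ‖t‖ ^ 2 * ‖w‖ ^ 2)
  have hinner : ⟪u + t • w, lam • u + t • W⟫_ℂ
      = lam + t * ⟪u, W⟫_ℂ + (‖t‖ : ℂ) ^ 2 * ⟪w, W⟫_ℂ := by
    simp only [inner_add_left, inner_add_right, inner_smul_left, inner_smul_right, horth',
      inner_self_eq_norm_sq_to_K, hu, ← Complex.mul_conj']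
    push_cast
    ring
  simpa only [hinner, hnorm] using inner_div_norm_sq_mem_numericalRange hmem hne

lemma inner_snd_eq_zero_of_inner_fst_eq_zero (hu : ‖u‖ = 1) (heig : (u, lam • u) ∈ G)
    (hlam : lam ∉ interior (numericalRange G)) (hw : (w, W) ∈ G) (horth : ⟪u, w⟫_ℂ = 0) :
    ⟪u, W⟫_ℂ = 0 := by
  by_contra ha
  refine hlam (mem_interior_iff_mem_nhds.2 ?_)
  -- the Rayleigh quotient of `u + t • w` minus `lam` is
  -- `(t ⟪u, W⟫ + ‖t‖² (⟪w, W⟫ - lam ‖w‖²)) / (1 + ‖t‖² ‖w‖²)`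
  have hcover := ((continuous_sub_right lam).tendsto' lam 0 (sub_self lam)).eventually
    (eventually_exists_mul_add_norm_sq_mul_eq ha (⟪w, W⟫_ℂ - lam * (‖w‖ : ℂ) ^ 2)
      (sq_nonneg ‖w‖))
  filter_upwards [hcover] with z ⟨t, ht⟩
  have hden : (1 + (‖t‖ : ℂ) ^ 2 * (‖w‖ : ℂ) ^ 2) ≠ 0 := by
    exact_mod_cast (by positivity : (0 : ℝ) < 1 + ‖t‖ ^ 2 * ‖w‖ ^ 2).ne'
  convert add_smul_mem_numericalRange hu heig hw horth t using 1
  rw [eq_div_iff hden]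
  push_cast at ht
  linear_combination -ht

lemma inner_snd_eq_mul_inner_fst_of_norm_eq_one (hu : ‖u‖ = 1) (heig : (u, lam • u) ∈ G)
    (hlam : lam ∉ interior (numericalRange G)) (hw : (w, W) ∈ G) :
    ⟪u, W⟫_ℂ = lam * ⟪u, w⟫_ℂ := by
  have hproj : (w - ⟪u, w⟫_ℂ • u, W - ⟪u, w⟫_ℂ • lam • u) ∈ G :=
    G.sub_mem hw (G.smul_mem _ heig)
  have horth : ⟪u, w - ⟪u, w⟫_ℂ • u⟫_ℂ = 0 := by
    rw [inner_sub_right, inner_smul_right, inner_self_eq_norm_sq_to_K, hu]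
    simp
  have := inner_snd_eq_zero_of_inner_fst_eq_zero hu heig hlam hproj horth
  rw [inner_sub_right, inner_smul_right, inner_smul_right, inner_self_eq_norm_sq_to_K, hu]
    at this
  push_cast at this
  linear_combination this

theorem inner_snd_eq_mul_inner_fst (hu : u ≠ 0) (heig : (u, lam • u) ∈ G)
    (hlam : lam ∉ interior (numericalRange G)) (hw : (w, W) ∈ G) :
    ⟪u, W⟫_ℂ = lam * ⟪u, w⟫_ℂ := by
  set c : ℂ := (‖u‖⁻¹ : ℂ)
  have hc : conj c ≠ 0 := by simpa [c] using hu
  have heig' : (c • u, lam • c • u) ∈ G := by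
    simpa only [Prod.smul_mk, smul_comm lam c u] using G.smul_mem c heig
  have h := inner_snd_eq_mul_inner_fst_of_norm_eq_one (norm_smul_inv_norm hu) heig' hlam hw
  rw [inner_smul_left, inner_smul_left] at h
  exact mul_left_cancel₀ hc (by linear_combination h)

end NumericalRange

section Lattice

variable {ν : ℕ}

lemma Jact_add (d x y : (Fin ν → ℤ) → ℂ) : Jact d (x + y) = Jact d x + Jact d y := by
  funext k
  simp only [Jact, Pi.add_apply, Finset.sum_add_distrib]
  ring

lemma Jact_smul (d : (Fin ν → ℤ) → ℂ) (c : ℂ) (x : (Fin ν → ℤ) → ℂ) :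
    Jact d (c • x) = c • Jact d x := by
  funext k
  simp only [Jact, Pi.smul_apply, smul_eq_mul, Finset.mul_sum, mul_add]
  ring

/-- The graph of `J = J₀ + D` as an operator on `ℓ²(ℤ^ν)`, with its maximal domain. -/
noncomputable def jacobiGraph (d : (Fin ν → ℤ) → ℂ) :
    Submodule ℂ (lp (fun _ : (Fin ν → ℤ) => ℂ) 2 × lp (fun _ : (Fin ν → ℤ) => ℂ) 2) where
  carrier := {p | ⇑p.2 = Jact d p.1}
  add_mem' {p q} hp hq := by
    simp only [Set.mem_ofPred_eq, Prod.fst_add, Prod.snd_add, lp.coeFn_add, Jact_add] at *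
    rw [hp, hq]
  zero_mem' := by
    funext k
    simp [Jact]
  smul_mem' c p hp := by
    simp only [Set.mem_ofPred_eq, Prod.smul_fst, Prod.smul_snd, lp.coeFn_smul, Jact_smul] at *
    rw [hp]

lemma numRangeJ_eq_numericalRange (d : (Fin ν → ℤ) → ℂ) :
    numRangeJ d = numericalRange (jacobiGraph d) := by
  ext z
  constructor
  · rintro ⟨u, v, hu, hv, rfl⟩
    exact ⟨(u, v), funext hv, hu, rfl⟩
  · rintro ⟨⟨u, v⟩, hv, hu, rfl⟩
    exact ⟨u, v, hu, congrFun hv, rfl⟩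

lemma single_mem_jacobiGraph (d : (Fin ν → ℤ) → ℂ) (k : Fin ν → ℤ) :
    (lp.single 2 k 1,
      (∑ j, (lp.single 2 (k - Pi.single j 1) 1 + lp.single 2 (k + Pi.single j 1) 1))
        + lp.single 2 k (d k)) ∈ jacobiGraph d := by
  funext m
  simp only [lp.coeFn_add, lp.coeFn_sum, Finset.sum_apply, Pi.add_apply, lp.coeFn_single, Jact,
    Pi.single_apply, sub_eq_iff_eq_add, ← eq_sub_iff_add_eq]
  by_cases h : m = k <;> simp [h]

lemma im_eq_im_of_apply_ne_zero {d : (Fin ν → ℤ) → ℂ} {lam : ℂ}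
    {u : lp (fun _ : (Fin ν → ℤ) => ℂ) 2} (hu : u ≠ 0) (heig : ∀ k, Jact d u k = lam * u k)
    (hlam : lam ∉ interior (numRangeJ d)) {k : Fin ν → ℤ} (huk : u k ≠ 0) :
    (d k).im = lam.im := by
  have heig' : (u, lam • u) ∈ jacobiGraph d := by
    funext m
    simp [heig]
  rw [numRangeJ_eq_numericalRange] at hlam
  have hadj := inner_snd_eq_mul_inner_fst hu heig' hlam (single_mem_jacobiGraph d k)
  simp only [inner_add_right, inner_sum, lp.inner_single_right, RCLike.inner_apply, one_mul]
    at hadj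
  have hadj' := congrArg conj hadj
  simp only [map_add, map_sum, map_mul, Complex.conj_conj] at hadj'
  have hk := heig k
  rw [Jact] at hk
  have hsum : ∑ j : Fin ν, (u (k - Pi.single j 1) + u (k + Pi.single j 1))
      = ∑ j : Fin ν, (u (k + Pi.single j 1) + u (k - Pi.single j 1)) :=
    Finset.sum_congr rfl fun j _ => add_comm _ _
  have hdiff : (d k - conj (d k)) * u k = (lam - conj lam) * u k := by
    linear_combination hk - hadj' + hsum
  have := congrArg Complex.im (mul_right_cancel₀ huk hdiff)
  simp only [Complex.sub_im, Complex.conj_im] at this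
  linarith

lemma eq_zero_of_forall_lt_apply_eq_zero {d u : (Fin ν → ℤ) → ℂ} {lam : ℂ}
    (heig : ∀ k, Jact d u k = lam * u k) (j : Fin ν) (M : ℤ)
    (hM : ∀ k, M < k j → u k = 0) : u = 0 := by
  have hstep : ∀ n : ℕ, ∀ k, M - n < k j → u k = 0 := by
    intro n
    induction n with
    | zero => simpa using hM
    | succ n ih =>
      intro k hk
      rcases (show M - n ≤ k j by push_cast at hk; omega).lt_or_eq with hlt | heq
      · exact ih k hlt
      -- apart from `u k`, the eigenvalue equation at `k + e_j` only sees values where `u`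
      -- already vanishes
      have hp := heig (k + Pi.single j 1)
      have hplus : ∀ i, u (k + Pi.single j 1 + Pi.single i 1) = 0 := fun i =>
        ih _ (by simp only [Pi.add_apply, Pi.single_apply]; split_ifs <;> omega)
      have hminus : ∀ i ≠ j, u (k + Pi.single j 1 - Pi.single i 1) = 0 := fun i hi =>
        ih _ (by simp [Ne.symm hi]; omega)
      rw [Jact, Finset.sum_eq_single j (fun i _ hi => by rw [hplus i, hminus i hi, add_zero])
        (fun h => (h (Finset.mem_univ j)).elim), hplus j, add_sub_cancel_right,
        ih (k + Pi.single j 1) (by simp; omega)] at hp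
      simpa using hp
  funext k
  exact hstep (M - k j + 1).toNat k (by omega)

end Lattice

theorem stmt12_general {ν : ℕ} (hν : 1 ≤ ν) (d : (Fin ν → ℤ) → ℂ)
    (hlim : ∀ ε > 0, ∃ N : ℕ, ∀ k : Fin ν → ℤ,
      (N : ℤ) ≤ ∑ j, |k j| → |(d k).im| < ε)
    (lam : ℂ) (u : lp (fun _ : (Fin ν → ℤ) => ℂ) 2) (hu : u ≠ 0)
    (heig : ∀ k, Jact d (fun m => u m) k = lam * u k)
    (hbd : lam ∈ frontier (numRangeJ d)) :
    lam.im = 0 := by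
  by_contra hlam
  obtain ⟨N, hN⟩ := hlim |lam.im| (abs_pos.2 hlam)
  have hsupp : ∀ k : Fin ν → ℤ, (N : ℤ) < k ⟨0, hν⟩ → u k = 0 := by
    intro k hk
    by_contra huk
    have hfar : (N : ℤ) ≤ ∑ j, |k j| := hk.le.trans ((le_abs_self _).trans
      (Finset.single_le_sum (fun i _ => abs_nonneg (k i)) (Finset.mem_univ _)))
    have := hN k hfar
    rw [im_eq_im_of_apply_ne_zero hu heig hbd.2 huk] at this
    exact lt_irrefl _ this
  exact hu (lp.ext (eq_zero_of_forall_lt_apply_eq_zero heig ⟨0, hν⟩ N hsupp))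

/-- If `Im(d k) → 0` as `‖k‖₁ → ∞`, then every eigenvalue of `J` lying on the
boundary of the numerical range of `J` is real. -/
theorem stmt12 {ν : ℕ} (hν : 1 ≤ ν) (d : (Fin ν → ℤ) → ℂ)
    (hd : ∃ C, ∀ k, ‖d k‖ ≤ C)
    (hlim : ∀ ε > 0, ∃ N : ℕ, ∀ k : Fin ν → ℤ,
      (N : ℤ) ≤ ∑ j, |k j| → |(d k).im| < ε)
    (lam : ℂ) (u : lp (fun _ : (Fin ν → ℤ) => ℂ) 2) (hu : u ≠ 0)
    (heig : ∀ k, Jact d (fun m => u m) k = lam * u k)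
    (hbd : lam ∈ frontier (numRangeJ d)) :
    lam.im = 0 :=
  stmt12_general hν d hlim lam u hu heig hbd
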